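/- Let a > 0 and set r = 1, t = a (the critical time t_c(a) = a). Then lim_{x → 0⁺} x^{1/3}·ρ(x;1,a,a) = (√3/(2π))·a^{−2/3}, i.e. the three-parametric Marcenko–Pastur density at the critical time diverges as ρ(x;1,a,a) ≃ (√3/(2π))·a^{−2/3}·x^{−1/3} as x → 0⁺. -/

import Mathlib

open Filter Topology

/-- The real cube root. -/
noncomputable def cbrt (y : ℝ) : ℝ :=
  if 0 ≤ y then y ^ ((1 : ℝ)/3) else -((-y) ^ ((1 : ℝ)/3))

/-- The cubic polynomial `S(x; r, t, a)`. -/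
noncomputable def S (x r t a : ℝ) : ℝ :=
  4*a*x^3 - (8*a^2 + 4*a*(3*r+2)*t - t^2)*x^2
    + 2*(2*a^3 - 2*a^2*(5*r-2)*t + a*(r*(6*r-1)+1)*t^2 - (r+1)*t^3)*x
    + (r-1)^2*t^2*(a^2 - a*(4*r-2)*t + t^2)

/-- The function `g(x; r, t, a)`. -/
noncomputable def g (x r t a : ℝ) : ℝ :=
  -2*x^3 + 3*((2*r+1)*t + 6*a)*x^2
    - 3*((r-1)*((2*r+1)*t - 3*a)*t - Real.sqrt (-3 * S x r t a))*x
    + 2*(r-1)^3*t^3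

/-- The function `φ(x; r, t, a)`. -/
noncomputable def phi (x r t a : ℝ) : ℝ :=
  -(2/3)*(x - (r-1)*t)
    - (cbrt 2 / 3) * ((x^2 + (3*a - (2*r+1)*t)*x + (r-1)^2*t^2) / cbrt (g x r t a))
    - cbrt (g x r t a) / (3 * cbrt 2)

/-- The function `D(x; r, t, a) = -4aφ + (t-a)²`. -/
noncomputable def Df (x r t a : ℝ) : ℝ := -4*a*phi x r t a + (t-a)^2

/-- The three-parametric Marcenko–Pastur density `ρ(x; r, t, a)`. -/
noncomputable def rho (x r t a : ℝ) : ℝ :=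
  Real.sqrt (2*(t - a + Real.sqrt (Df x r t a))*x - (phi x r t a)^2)
    / (2*Real.pi*r*t*x)

/-- The real part `R(x; r, t, a)` of the boundary value of the Green's function. -/
noncomputable def Rf (x r t a : ℝ) : ℝ :=
  (2*x + (r-1)*t)/(3*r*t*x)
    - (x^2 + (3*a - (2*r+1)*t)*x + (r-1)^2*t^2) / (3 * (cbrt 2)^2 * r * t * cbrt (g x r t a) * x)
    - cbrt (g x r t a) / (6 * cbrt 2 * r * t * x)

/-!
At the critical point `r = 1`, `t = a` the constant terms of `S` and `g` vanish and the
substitution `x = u³` makes everything homogeneous: `√(−3S) = u³·√(3a(27a − 4u³))`,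
`g = u⁶·gScaled(u)` and `φ = u²·phiScaled(u)`. Since `gScaled(0) = 54a > 0`, the cube root
in `phiScaled` is harmless near `0`, so `u·ρ(u³; 1, a, a)` is a function of `u` continuous at
`0`, whose value there is `(√3/(2π))·a^{−2/3}` because `phiScaled(0) = −a^{1/3}`.
-/

lemma one_div_three_eq_inv_natCast : (1 : ℝ) / 3 = ((3 : ℕ) : ℝ)⁻¹ := by norm_num

lemma cbrt_of_nonneg {y : ℝ} (hy : 0 ≤ y) : cbrt y = y ^ ((1 : ℝ) / 3) := if_pos hy

lemma cbrt_neg (y : ℝ) : cbrt (-y) = -cbrt y := by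
  rcases lt_trichotomy y 0 with hy | rfl | hy
  · rw [cbrt_of_nonneg (by linarith), cbrt, if_neg hy.not_ge, neg_neg]
  · simp [cbrt]
  · rw [cbrt, if_neg (by linarith), neg_neg, cbrt_of_nonneg hy.le]

lemma cbrt_pos {y : ℝ} (hy : 0 < y) : 0 < cbrt y := by
  rw [cbrt_of_nonneg hy.le]
  exact Real.rpow_pos_of_pos hy _

lemma cbrt_mul_of_nonneg_left {c : ℝ} (hc : 0 ≤ c) (y : ℝ) :
    cbrt (c * y) = cbrt c * cbrt y := by
  rcases le_or_gt 0 y with hy | hy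
  · rw [cbrt_of_nonneg (mul_nonneg hc hy), cbrt_of_nonneg hc, cbrt_of_nonneg hy,
      Real.mul_rpow hc hy]
  · rw [← neg_neg y, mul_neg, cbrt_neg, cbrt_neg, cbrt_of_nonneg (by nlinarith),
      cbrt_of_nonneg hc, cbrt_of_nonneg (by linarith), Real.mul_rpow hc (by linarith), mul_neg]

lemma cbrt_pow_three (u : ℝ) : cbrt (u ^ 3) = u := by
  rcases le_or_gt 0 u with hu | hu
  · rw [cbrt_of_nonneg (by positivity), one_div_three_eq_inv_natCast,
      Real.pow_rpow_inv_natCast hu three_ne_zero]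
  · rw [show u ^ 3 = -(-u) ^ 3 by ring, cbrt_neg,
      cbrt_of_nonneg (pow_nonneg (neg_nonneg.2 hu.le) 3), one_div_three_eq_inv_natCast,
      Real.pow_rpow_inv_natCast (by linarith) three_ne_zero, neg_neg]

lemma pow_three_cbrt (y : ℝ) : cbrt y ^ 3 = y := by
  rcases le_or_gt 0 y with hy | hy
  · rw [cbrt_of_nonneg hy, one_div_three_eq_inv_natCast,
      Real.rpow_inv_natCast_pow hy three_ne_zero]
  · rw [← neg_neg y, cbrt_neg, cbrt_of_nonneg (by linarith), neg_pow,
      one_div_three_eq_inv_natCast,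
      Real.rpow_inv_natCast_pow (by linarith) three_ne_zero]
    ring

lemma continuousAt_cbrt {y : ℝ} (hy : 0 < y) : ContinuousAt cbrt y := by
  have h : (fun z : ℝ => z ^ ((1 : ℝ) / 3)) =ᶠ[𝓝 y] cbrt := by
    filter_upwards [eventually_gt_nhds hy] with z hz
    rw [cbrt_of_nonneg hz.le]
  exact (Real.continuousAt_rpow_const y _ (Or.inl hy.ne')).congr h

section Critical

variable {a u : ℝ}

noncomputable def gScaled (a u : ℝ) : ℝ :=
  27 * a - 2 * u ^ 3 + 3 * √(3 * a * (27 * a - 4 * u ^ 3))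

noncomputable def phiScaled (a u : ℝ) : ℝ :=
  -(2 / 3) * u - cbrt 2 / 3 * u ^ 2 / cbrt (gScaled a u) - cbrt (gScaled a u) / (3 * cbrt 2)

noncomputable def rhoScaled (a u : ℝ) : ℝ :=
  √(2 * √(-4 * a * phiScaled a u) - phiScaled a u ^ 2) / (2 * Real.pi * a)

lemma g_critical (hu : 0 ≤ u) : g (u ^ 3) 1 a a = u ^ 6 * gScaled a u := by
  have hS : -3 * S (u ^ 3) 1 a a = (u ^ 3) ^ 2 * (3 * a * (27 * a - 4 * u ^ 3)) := by
    unfold S; ring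
  rw [g, hS, Real.sqrt_mul (by positivity), Real.sqrt_sq (by positivity), gScaled]
  ring

lemma phi_critical (hu : 0 < u) : phi (u ^ 3) 1 a a = u ^ 2 * phiScaled a u := by
  have hcbrt : cbrt (g (u ^ 3) 1 a a) = u ^ 2 * cbrt (gScaled a u) := by
    rw [g_critical hu.le, show u ^ 6 = (u ^ 2) ^ 3 by ring,
      cbrt_mul_of_nonneg_left (by positivity), cbrt_pow_three]
  rw [phi, phiScaled, hcbrt]
  field_simp
  ring

lemma mul_rho_critical (hu : 0 < u) : u * rho (u ^ 3) 1 a a = rhoScaled a u := by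
  have hD : √(Df (u ^ 3) 1 a a) = u * √(-4 * a * phiScaled a u) := by
    rw [Df, phi_critical hu, show -4 * a * (u ^ 2 * phiScaled a u) + (a - a) ^ 2
      = u ^ 2 * (-4 * a * phiScaled a u) by ring, Real.sqrt_mul (sq_nonneg u),
      Real.sqrt_sq hu.le]
  have hradicand : 2 * (a - a + √(Df (u ^ 3) 1 a a)) * u ^ 3 - phi (u ^ 3) 1 a a ^ 2
      = (u ^ 2) ^ 2 * (2 * √(-4 * a * phiScaled a u) - phiScaled a u ^ 2) := by
    rw [hD, phi_critical hu]; ring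
  rw [rho, rhoScaled, hradicand, Real.sqrt_mul (by positivity), Real.sqrt_sq (by positivity)]
  field_simp

lemma phiScaled_zero (ha : 0 ≤ a) : phiScaled a 0 = -cbrt a := by
  have hG : gScaled a 0 = 2 * (3 ^ 3 * a) := by
    rw [gScaled, show 3 * a * (27 * a - 4 * 0 ^ 3) = (9 * a) ^ 2 by ring,
      Real.sqrt_sq (by positivity)]
    ring
  have hc2 : cbrt 2 ≠ 0 := (cbrt_pos two_pos).ne'
  rw [phiScaled, hG, cbrt_mul_of_nonneg_left zero_le_two,
    cbrt_mul_of_nonneg_left (by positivity), cbrt_pow_three]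
  field_simp
  ring

lemma rhoScaled_zero (ha : 0 < a) :
    rhoScaled a 0 = Real.sqrt 3 / (2 * Real.pi) * a ^ (-(2 : ℝ) / 3) := by
  have hc : 0 < cbrt a := cbrt_pos ha
  have ha3 : a = cbrt a ^ 3 := (pow_three_cbrt a).symm
  have hrpow : a ^ (-(2 : ℝ) / 3) = (cbrt a ^ 2)⁻¹ := by
    rw [cbrt_of_nonneg ha.le, ← Real.rpow_natCast, ← Real.rpow_mul ha.le,
      ← Real.rpow_neg ha.le]
    norm_num
  have hradicand : 2 * √(-4 * a * -cbrt a) - (-cbrt a) ^ 2 = 3 * cbrt a ^ 2 := by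
    rw [show -4 * a * -cbrt a = (2 * cbrt a ^ 2) ^ 2 by linear_combination 4 * cbrt a * ha3,
      Real.sqrt_sq (by positivity)]
    ring
  rw [rhoScaled, phiScaled_zero ha.le, hradicand, Real.sqrt_mul zero_le_three,
    Real.sqrt_sq hc.le, hrpow]
  field_simp
  linear_combination -ha3

lemma continuousAt_rhoScaled_zero (ha : 0 < a) : ContinuousAt (rhoScaled a) 0 := by
  have hG : 0 < gScaled a 0 := by
    have := Real.sqrt_nonneg (3 * a * (27 * a - 4 * 0 ^ 3))
    rw [gScaled]; nlinarith
  have hcbrt : ContinuousAt (fun u => cbrt (gScaled a u)) 0 :=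
    (continuousAt_cbrt hG).comp (by unfold gScaled; fun_prop)
  have hphi : ContinuousAt (phiScaled a) 0 := by
    have hc2 : 3 * cbrt 2 ≠ 0 := by have := cbrt_pos two_pos; positivity
    unfold phiScaled
    exact ((by fun_prop : ContinuousAt (fun u : ℝ => -(2 / 3) * u) 0).sub
      ((by fun_prop : ContinuousAt (fun u : ℝ => cbrt 2 / 3 * u ^ 2) 0).div hcbrt
        (cbrt_pos hG).ne')).sub (hcbrt.div continuousAt_const hc2)
  unfold rhoScaled
  exact ((continuousAt_const.mul (continuousAt_const.mul hphi).sqrt).sub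
    (hphi.pow 2)).sqrt.div continuousAt_const (by positivity)

end Critical

lemma tendsto_rpow_one_third_nhdsGT_zero :
    Tendsto (fun x : ℝ => x ^ ((1 : ℝ) / 3)) (𝓝[>] 0) (𝓝 0) := by
  have h := (Real.continuousAt_rpow_const 0 ((1 : ℝ) / 3) (Or.inr (by norm_num))).tendsto
  rw [Real.zero_rpow (by norm_num)] at h
  exact h.mono_left nhdsWithin_le_nhds

theorem stmt_14 (a : ℝ) (ha : 0 < a) :
    Filter.Tendsto (fun x : ℝ => x ^ ((1:ℝ)/3) * rho x 1 a a)
      (nhdsWithin 0 (Set.Ioi 0))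
      (nhds ((Real.sqrt 3 / (2*Real.pi)) * a ^ (-(2:ℝ)/3))) := by
  rw [← rhoScaled_zero ha]
  refine ((continuousAt_rhoScaled_zero ha).tendsto.comp
    tendsto_rpow_one_third_nhdsGT_zero).congr' ?_
  filter_upwards [self_mem_nhdsWithin] with x (hx : 0 < x)
  have hcube : (x ^ ((1 : ℝ) / 3)) ^ 3 = x := by
    rw [one_div_three_eq_inv_natCast, Real.rpow_inv_natCast_pow hx.le three_ne_zero]
  rw [Function.comp_apply, ← mul_rho_critical (Real.rpow_pos_of_pos hx _), hcube]
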